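/- arXiv:2112.06160 — 4 statements merged into one kernel-verified Lean document; each statement's English description precedes it below -/
import Mathlib

section
/- (AUC addition update) Let Z be a finite multiset of data points (score, label) with label counts (n1, n2), and let Y be a finite multiset of points all having the same score σ with label counts (w1, w2). Let (u1, u2) be the label counts of points in Z with score strictly less than σ, and (v1, v2) the label counts of points in Z with score equal to σ. If U denotes the Mann-Whitney statistic of Z and U' that of Z ∪ Y, then U' = U + w2(u1 + v1/2) + w1(n2 − u2 − v2/2) + w1·w2/2. -/
/-- The Mann-Whitney comparison function. -/
noncomputable def mwf (s t : ℝ) : ℝ := if s < t then 1 else if s = t then 1/2 else 0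

/-- The Mann-Whitney U statistic of a multiset of (score, label) pairs,
comparing the scores of label-1 points to the scores of label-2 points. -/
noncomputable def mwStat (Z : Multiset (ℝ × ℕ)) : ℝ :=
  (((Z.filter (fun z => z.2 = 1)).map Prod.fst).map
      (fun s => (((Z.filter (fun z => z.2 = 2)).map Prod.fst).map (fun t => mwf s t)).sum)).sum

lemma sum_mwf_left (M : Multiset ℝ) (σ : ℝ) :
    (M.map (fun s => mwf s σ)).sum
      = ((M.filter (· < σ)).card : ℝ) + ((M.filter (· = σ)).card : ℝ) / 2 := by
  induction M using Multiset.induction with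
  | empty => simp
  | cons a M ih =>
    simp only [Multiset.map_cons, Multiset.sum_cons, ih, Multiset.filter_cons]
    unfold mwf
    by_cases h1 : a < σ
    · simp [h1, ne_of_lt h1]; ring
    · by_cases h2 : a = σ
      · simp [h1, h2]; ring
      · simp [h1, h2]

lemma sum_mwf_right (M : Multiset ℝ) (σ : ℝ) :
    (M.map (fun t => mwf σ t)).sum
      = (M.card : ℝ) - ((M.filter (· < σ)).card : ℝ) - ((M.filter (· = σ)).card : ℝ) / 2 := by
  induction M using Multiset.induction with
  | empty => simp
  | cons a M ih =>
    simp only [Multiset.map_cons, Multiset.sum_cons, ih, Multiset.filter_cons,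
      Multiset.card_cons]
    unfold mwf
    by_cases h1 : a < σ
    · simp [h1, not_lt_of_gt h1, ne_of_lt h1, ne_of_gt h1]
    · by_cases h2 : a = σ
      · simp [h1, h2]; ring
      · have h3 : σ < a := lt_of_le_of_ne (not_lt.mp h1) (Ne.symm h2)
        simp [h1, h2, h3, Ne.symm h2]; ring

lemma card_filter_map (Z : Multiset (ℝ × ℕ)) (p : ℕ → Prop) [DecidablePred p]
    (q : ℝ → Prop) [DecidablePred q] :
    (((Z.filter (fun z => p z.2)).map Prod.fst).filter q).card
      = (Z.filter (fun z => p z.2 ∧ q z.1)).card := by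
  rw [Multiset.filter_map, Multiset.card_map, Multiset.filter_filter]
  congr 1
  exact Multiset.filter_congr (fun a _ => by simp [and_comm])

theorem auc_addition_update (Z Y : Multiset (ℝ × ℕ)) (σ : ℝ)
    (hlabZ : ∀ z ∈ Z, z.2 = 1 ∨ z.2 = 2)
    (hlabY : ∀ z ∈ Y, z.2 = 1 ∨ z.2 = 2)
    (hscoreY : ∀ z ∈ Y, z.1 = σ) :
    mwStat (Z + Y)
      = mwStat Z
        + ((Y.filter (fun z => z.2 = 2)).card : ℝ) *
            (((Z.filter (fun z => z.2 = 1 ∧ z.1 < σ)).card : ℝ)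
              + ((Z.filter (fun z => z.2 = 1 ∧ z.1 = σ)).card : ℝ) / 2)
        + ((Y.filter (fun z => z.2 = 1)).card : ℝ) *
            (((Z.filter (fun z => z.2 = 2)).card : ℝ)
              - ((Z.filter (fun z => z.2 = 2 ∧ z.1 < σ)).card : ℝ)
              - ((Z.filter (fun z => z.2 = 2 ∧ z.1 = σ)).card : ℝ) / 2)
        + ((Y.filter (fun z => z.2 = 1)).card : ℝ) *
            ((Y.filter (fun z => z.2 = 2)).card : ℝ) / 2 := by
  classical
  set Z1 := (Z.filter (fun z => z.2 = 1)).map Prod.fst with hZ1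
  set Z2 := (Z.filter (fun z => z.2 = 2)).map Prod.fst with hZ2
  set w1 := (Y.filter (fun z => z.2 = 1)).card with hw1
  set w2 := (Y.filter (fun z => z.2 = 2)).card with hw2
  have hY1 : (Y.filter (fun z => z.2 = 1)).map Prod.fst = Multiset.replicate w1 σ := by
    rw [Multiset.eq_replicate]
    constructor
    · rw [Multiset.card_map]
    · intro b hb
      obtain ⟨z, hz, rfl⟩ := Multiset.mem_map.mp hb
      exact hscoreY z (Multiset.mem_of_mem_filter hz)
  have hY2 : (Y.filter (fun z => z.2 = 2)).map Prod.fst = Multiset.replicate w2 σ := by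
    rw [Multiset.eq_replicate]
    constructor
    · rw [Multiset.card_map]
    · intro b hb
      obtain ⟨z, hz, rfl⟩ := Multiset.mem_map.mp hb
      exact hscoreY z (Multiset.mem_of_mem_filter hz)
  have hmwσ : mwf σ σ = 1/2 := by simp [mwf]
  have inner : ∀ s : ℝ,
      ((((Z + Y).filter (fun z => z.2 = 2)).map Prod.fst).map (fun t => mwf s t)).sum
        = (Z2.map (fun t => mwf s t)).sum + (w2 : ℝ) * mwf s σ := by
    intro s
    rw [Multiset.filter_add, Multiset.map_add, Multiset.map_add, Multiset.sum_add,
      hY2, Multiset.map_replicate, Multiset.sum_replicate, nsmul_eq_mul]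
  have key : mwStat (Z + Y)
      = mwStat Z + (w2 : ℝ) * (Z1.map (fun s => mwf s σ)).sum
        + (w1 : ℝ) * ((Z2.map (fun t => mwf σ t)).sum + (w2 : ℝ) * (1/2)) := by
    unfold mwStat
    simp only [inner]
    rw [Multiset.filter_add, Multiset.map_add, Multiset.map_add, Multiset.sum_add, hY1,
      Multiset.map_replicate, Multiset.sum_replicate, nsmul_eq_mul, hmwσ]
    rw [Multiset.sum_map_add, Multiset.sum_map_mul_left]
  rw [key, sum_mwf_left, sum_mwf_right]
  have c1 := card_filter_map Z (fun n => n = 1) (fun s => s < σ)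
  have c2 := card_filter_map Z (fun n => n = 1) (fun s => s = σ)
  have c3 := card_filter_map Z (fun n => n = 2) (fun s => s < σ)
  have c4 := card_filter_map Z (fun n => n = 2) (fun s => s = σ)
  have cz2 : Z2.card = (Z.filter (fun z => z.2 = 2)).card := Multiset.card_map _ _
  simp only [hZ1, hZ2] at *
  rw [c1, c2, c3, c4, cz2]
  ring
end

section
/- (AUC deletion update) Let Z be a finite multiset of data points (score, label) with label counts (n1, n2), and let Y ⊆ Z be a sub-multiset of points all having the same score σ with label counts (w1, w2). Let (u1, u2) be the label counts of points in Z with score strictly less than σ, and (v1, v2) the label counts of points in Z with score equal to σ. If U denotes the Mann-Whitney statistic of Z and U' that of Z \ Y, then U' = U − w2(u1 + v1/2) − w1(n2 − u2 − v2/2) + w1·w2/2. -/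
/-!
The statistic is a bilinear form `U(A, B)` in the multisets of label-1 and label-2 scores, so
deleting `Y` from `Z = W + Y` gives `U(A_W, B_W) = U(A_Z, B_Z) - U(A_Z, B_Y) - U(A_Y, B_Z) + U(A_Y, B_Y)`
by inclusion–exclusion. Since all scores of `Y` equal `σ`, each correction term only counts the
points of `Z` below and at `σ`.
-/

open Multiset

noncomputable def mannWhitney (A B : Multiset ℝ) : ℝ :=
  (A.map fun s => (B.map fun t => mwf s t).sum).sum

def scores (Z : Multiset (ℝ × ℕ)) (l : ℕ) : Multiset ℝ :=
  (Z.filter fun z => z.2 = l).map Prod.fst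

lemma mwStat_eq_mannWhitney (Z : Multiset (ℝ × ℕ)) :
    mwStat Z = mannWhitney (scores Z 1) (scores Z 2) := rfl

lemma mwf_add_mwf_swap (s t : ℝ) : mwf s t + mwf t s = 1 := by
  unfold mwf
  rcases lt_trichotomy s t with h | rfl | h
  · simp [h, h.ne', not_lt.mpr h.le]
  · norm_num
  · simp [h, h.ne', not_lt.mpr h.le]

lemma sum_map_mwf_left (T : Multiset ℝ) (σ : ℝ) :
    (T.map fun t => mwf t σ).sum
      = (T.filter (· < σ)).card + ((T.filter (· = σ)).card : ℝ) / 2 := by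
  induction T using Multiset.induction_on with
  | empty => simp
  | cons a T ih =>
    simp only [map_cons, sum_cons, ih, filter_cons]
    unfold mwf
    rcases lt_trichotomy a σ with h | rfl | h
    · simp only [h, h.ne, ↓reduceIte, singleton_add, card_cons, Nat.cast_add, Nat.cast_one,
        Multiset.zero_add]
      ring
    · simp only [lt_self_iff_false, ↓reduceIte, Multiset.zero_add, singleton_add, card_cons,
        Nat.cast_add, Nat.cast_one]
      ring
    · simp [not_lt.mpr h.le, h.ne']

lemma sum_map_mwf_right (T : Multiset ℝ) (σ : ℝ) :
    (T.map fun t => mwf σ t).sum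
      = T.card - (T.filter (· < σ)).card - ((T.filter (· = σ)).card : ℝ) / 2 := by
  have hswap : (T.map fun t => mwf σ t).sum = (T.map fun t => 1 - mwf t σ).sum := by
    congr 1
    exact map_congr rfl fun t _ => by linarith [mwf_add_mwf_swap σ t]
  rw [hswap, sum_map_sub, sum_map_mwf_left]
  simp only [map_const', sum_replicate, nsmul_eq_mul, mul_one]
  ring

lemma mannWhitney_add_left (A₁ A₂ B : Multiset ℝ) :
    mannWhitney (A₁ + A₂) B = mannWhitney A₁ B + mannWhitney A₂ B := by
  simp [mannWhitney]

lemma mannWhitney_add_right (A B₁ B₂ : Multiset ℝ) :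
    mannWhitney A (B₁ + B₂) = mannWhitney A B₁ + mannWhitney A B₂ := by
  simp only [mannWhitney, map_add, sum_add]
  exact sum_map_add

lemma mannWhitney_add_add (A₁ A₂ B₁ B₂ : Multiset ℝ) :
    mannWhitney A₁ B₁ = mannWhitney (A₁ + A₂) (B₁ + B₂) - mannWhitney (A₁ + A₂) B₂
      - mannWhitney A₂ (B₁ + B₂) + mannWhitney A₂ B₂ := by
  simp only [mannWhitney_add_left, mannWhitney_add_right]
  ring

lemma mannWhitney_replicate_left (n : ℕ) (σ : ℝ) (B : Multiset ℝ) :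
    mannWhitney (replicate n σ) B
      = n * (B.card - (B.filter (· < σ)).card - ((B.filter (· = σ)).card : ℝ) / 2) := by
  simp [mannWhitney, sum_map_mwf_right]

lemma mannWhitney_replicate_right (A : Multiset ℝ) (n : ℕ) (σ : ℝ) :
    mannWhitney A (replicate n σ)
      = n * ((A.filter (· < σ)).card + ((A.filter (· = σ)).card : ℝ) / 2) := by
  simp only [mannWhitney, map_replicate, sum_replicate, nsmul_eq_mul]
  rw [sum_map_mul_left, sum_map_mwf_left]

lemma mannWhitney_replicate_replicate (m n : ℕ) (σ : ℝ) :
    mannWhitney (replicate m σ) (replicate n σ) = m * n / 2 := by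
  simp only [mannWhitney, mwf, map_replicate, sum_replicate, lt_self_iff_false, ↓reduceIte,
    nsmul_eq_mul]
  ring

lemma scores_add (W Y : Multiset (ℝ × ℕ)) (l : ℕ) :
    scores (W + Y) l = scores W l + scores Y l := by
  simp [scores]

lemma card_scores (Z : Multiset (ℝ × ℕ)) (l : ℕ) :
    (scores Z l).card = (Z.filter fun z => z.2 = l).card :=
  card_map _ _

lemma scores_eq_replicate {Y : Multiset (ℝ × ℕ)} {σ : ℝ} (hY : ∀ z ∈ Y, z.1 = σ) (l : ℕ) :
    scores Y l = replicate (Y.filter fun z => z.2 = l).card σ := by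
  rw [← card_scores]
  refine eq_replicate_card.mpr fun s hs => ?_
  obtain ⟨z, hz, rfl⟩ := mem_map.mp hs
  exact hY z (mem_of_mem_filter hz)

lemma card_filter_scores (Z : Multiset (ℝ × ℕ)) (l : ℕ) (p : ℝ → Prop) [DecidablePred p] :
    ((scores Z l).filter p).card = (Z.filter fun z => z.2 = l ∧ p z.1).card := by
  rw [scores, filter_map, card_map, filter_filter]
  simp only [Function.comp, and_comm]

theorem auc_deletion_update_general (Z Y : Multiset (ℝ × ℕ)) (σ : ℝ)
    (hscoreY : ∀ z ∈ Y, z.1 = σ) (hsub : Y ≤ Z) :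
    mwStat (Z - Y)
      = mwStat Z
        - ((Y.filter (fun z => z.2 = 2)).card : ℝ) *
            (((Z.filter (fun z => z.2 = 1 ∧ z.1 < σ)).card : ℝ)
              + ((Z.filter (fun z => z.2 = 1 ∧ z.1 = σ)).card : ℝ) / 2)
        - ((Y.filter (fun z => z.2 = 1)).card : ℝ) *
            (((Z.filter (fun z => z.2 = 2)).card : ℝ)
              - ((Z.filter (fun z => z.2 = 2 ∧ z.1 < σ)).card : ℝ)
              - ((Z.filter (fun z => z.2 = 2 ∧ z.1 = σ)).card : ℝ) / 2)
        + ((Y.filter (fun z => z.2 = 1)).card : ℝ) *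
            ((Y.filter (fun z => z.2 = 2)).card : ℝ) / 2 := by
  have hZ : Z - Y + Y = Z := tsub_add_cancel_of_le hsub
  rw [mwStat_eq_mannWhitney, mwStat_eq_mannWhitney,
    mannWhitney_add_add (scores (Z - Y) 1) (scores Y 1) _ (scores Y 2),
    ← scores_add, ← scores_add, hZ, scores_eq_replicate hscoreY 1, scores_eq_replicate hscoreY 2,
    mannWhitney_replicate_right, mannWhitney_replicate_left, mannWhitney_replicate_replicate,
    card_filter_scores, card_filter_scores, card_filter_scores, card_filter_scores, card_scores]

theorem auc_deletion_update (Z Y : Multiset (ℝ × ℕ)) (σ : ℝ)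
    (hlabZ : ∀ z ∈ Z, z.2 = 1 ∨ z.2 = 2)
    (hlabY : ∀ z ∈ Y, z.2 = 1 ∨ z.2 = 2)
    (hscoreY : ∀ z ∈ Y, z.1 = σ) (hsub : Y ≤ Z) :
    mwStat (Z - Y)
      = mwStat Z
        - ((Y.filter (fun z => z.2 = 2)).card : ℝ) *
            (((Z.filter (fun z => z.2 = 1 ∧ z.1 < σ)).card : ℝ)
              + ((Z.filter (fun z => z.2 = 1 ∧ z.1 = σ)).card : ℝ) / 2)
        - ((Y.filter (fun z => z.2 = 1)).card : ℝ) *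
            (((Z.filter (fun z => z.2 = 2)).card : ℝ)
              - ((Z.filter (fun z => z.2 = 2 ∧ z.1 < σ)).card : ℝ)
              - ((Z.filter (fun z => z.2 = 2 ∧ z.1 = σ)).card : ℝ) / 2)
        + ((Y.filter (fun z => z.2 = 1)).card : ℝ) *
            ((Y.filter (fun z => z.2 = 2)).card : ℝ) / 2 :=
  auc_deletion_update_general Z Y σ hscoreY hsub
end

section
/- Let F: [0,1] → ℝ be defined piecewise by F(c) = a_i for c_i ≤ c < c_{i+1} (i = 0, ..., m), with 0 = c_0 ≤ c_1 ≤ ... ≤ c_{m+1} = 1, where (a_i) is nondecreasing and a_i ≥ 0. Suppose G is defined similarly from a subsequence (b_j) = (a_{i_j}) with corresponding slope points (c'_j) satisfying c'_j ≤ c_{i_j} and c'_{j+1} ≥ c_{i_j + 1}, and whenever a_{i_{j+1}} > (1+ε)·a_{i_j} no index of (a_i) is skipped between i_j and i_{j+1} (i.e., i_{j+1} = i_j + 1). Then |F(c) − G(c)| ≤ ε·F(c) for all c ∈ [0,1). -/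
private lemma chain_le {α : Type*} [Preorder α] (f : ℕ → α) (n : ℕ)
    (h : ∀ i, i + 1 ≤ n → f i ≤ f (i + 1)) :
    ∀ i i', i ≤ i' → i' ≤ n → f i ≤ f i' := by
  intro i i' hii hin
  induction i' with
  | zero => simp_all [Nat.le_zero.mp hii]
  | succ p ih =>
    rcases Nat.eq_or_lt_of_le hii with rfl | hlt
    · exact le_refl _
    · exact le_trans (ih (Nat.lt_succ_iff.mp hlt) (le_trans (Nat.le_succ p) hin)) (h p hin)

private lemma find_interval (c : ℕ → ℝ) (m : ℕ) (x : ℝ) (h0 : c 0 ≤ x)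
    (hlast : x < c (m + 1)) : ∃ i, i ≤ m ∧ c i ≤ x ∧ x < c (i + 1) := by
  induction m with
  | zero => exact ⟨0, le_refl _, h0, hlast⟩
  | succ p ih =>
    by_cases hx : x < c (p + 1)
    · obtain ⟨i, hi, h1, h2⟩ := ih hx
      exact ⟨i, le_trans hi (Nat.le_succ p), h1, h2⟩
    · exact ⟨p + 1, le_refl _, le_of_not_gt hx, hlast⟩


theorem step_function_subsample_approx (ε : ℝ) (hε : 0 < ε)
    (m k : ℕ) (a : ℕ → ℝ) (c : ℕ → ℝ) (idx : ℕ → ℕ) (c' : ℕ → ℝ)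
    (F G : ℝ → ℝ)
    -- breakpoints of F
    (hc0 : c 0 = 0) (hclast : c (m + 1) = 1)
    (hcmono : ∀ i, i ≤ m → c i ≤ c (i + 1))
    -- the values a_i are nonnegative and nondecreasing
    (hapos : ∀ i, i ≤ m → 0 ≤ a i)
    (hamono : ∀ i, i + 1 ≤ m → a i ≤ a (i + 1))
    -- F is the step function with value a_i on [c_i, c_{i+1})
    (hF : ∀ i, i ≤ m → ∀ x, c i ≤ x → x < c (i + 1) → F x = a i)
    -- idx selects a subsequence of indices containing the endpoints
    (hidxmono : ∀ j, j + 1 ≤ k → idx j < idx (j + 1))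
    (hidx0 : idx 0 = 0) (hidxk : idx k = m)
    -- breakpoints of G
    (hc'0 : c' 0 = 0) (hc'last : c' (k + 1) = 1)
    (hc'mono : ∀ j, j ≤ k → c' j ≤ c' (j + 1))
    -- nesting of breakpoints (from convexity)
    (hnest : ∀ j, j ≤ k → c' j ≤ c (idx j) ∧ c (idx j + 1) ≤ c' (j + 1))
    -- multiplicative gap condition: if the retained values jump by more than
    -- a (1+ε) factor, then no index was skipped in between
    (hgap : ∀ j, j + 1 ≤ k → (1 + ε) * a (idx j) < a (idx (j + 1)) → idx (j + 1) = idx j + 1)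
    -- G is the step function with value a_{idx j} on [c'_j, c'_{j+1})
    (hG : ∀ j, j ≤ k → ∀ x, c' j ≤ x → x < c' (j + 1) → G x = a (idx j)) :
    ∀ x : ℝ, 0 ≤ x → x < 1 → |F x - G x| ≤ ε * F x := by

  intro x hx0 hx1
  -- locate x in F's partition
  obtain ⟨i, him, hcix, hcix1⟩ := find_interval c m x (hc0 ▸ hx0) (hclast ▸ hx1)
  obtain ⟨j, hjk, hcjx, hcjx1⟩ := find_interval c' k x (hc'0 ▸ hx0) (hc'last ▸ hx1)
  have hcchain : ∀ p q, p ≤ q → q ≤ m + 1 → c p ≤ c q :=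
    chain_le c (m + 1) (fun p hp => hcmono p (Nat.lt_succ_iff.mp hp))
  have hachain : ∀ p q, p ≤ q → q ≤ m → a p ≤ a q := chain_le a m hamono
  have hidxchain : ∀ p q, p ≤ q → q ≤ k → idx p ≤ idx q :=
    chain_le idx k (fun p hp => le_of_lt (hidxmono p hp))
  have hidxm : ∀ p, p ≤ k → idx p ≤ m := fun p hp => hidxk ▸ hidxchain p k hp (le_refl _)
  have hFx : F x = a i := hF i him x hcix hcix1
  have hGx : G x = a (idx j) := hG j hjk x hcjx hcjx1
  have haipos : 0 ≤ a i := hapos i him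
  have hidxjm : idx j ≤ m := hidxm j hjk
  rcases lt_or_ge i (idx j) with hlt | hge
  · -- i < idx j : use gap condition at j-1
    obtain ⟨jp, rfl⟩ : ∃ jp, j = jp + 1 := by
      cases j with
      | zero => exact absurd hlt (by simp [hidx0])
      | succ p => exact ⟨p, rfl⟩
    have hjpk : jp + 1 ≤ k := hjk
    have hidxjpm : idx jp ≤ m := hidxm jp (le_trans (Nat.le_succ jp) hjk)
    have hlow : idx jp + 1 ≤ i := by
      by_contra h
      push_neg at h
      have h1 : c (idx jp + 1) ≤ c' (jp + 1) := (hnest jp (le_trans (Nat.le_succ jp) hjk)).2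
      have h2 : c (i + 1) ≤ c (idx jp + 1) := hcchain (i + 1) (idx jp + 1)
        (Nat.succ_le_of_lt h) (Nat.succ_le_succ hidxjpm)
      linarith
    by_cases hg : (1 + ε) * a (idx jp) < a (idx (jp + 1))
    · have := hgap jp hjpk hg
      omega
    · push_neg at hg
      have h1 : a (idx jp) ≤ a i := hachain (idx jp) i (by omega) him
      have h2 : a i ≤ a (idx (jp + 1)) := hachain i (idx (jp + 1)) (le_of_lt hlt) hidxjm
      rw [hFx, hGx]
      rw [abs_le]
      constructor <;> nlinarith
  · -- idx j ≤ i
    rcases Nat.eq_or_lt_of_le hjk with rfl | hjlt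
    · have : i = idx j := le_antisymm (hidxk ▸ him) hge
      rw [hFx, hGx, this]
      simp only [sub_self, abs_zero]
      exact mul_nonneg hε.le (this ▸ haipos)
    · have hj1k : j + 1 ≤ k := hjlt
      have hidxj1m : idx (j + 1) ≤ m := hidxm (j + 1) hj1k
      have hilt : i < idx (j + 1) := by
        by_contra h
        push_neg at h
        have h1 : c' (j + 1) ≤ c (idx (j + 1)) := (hnest (j + 1) hj1k).1
        have h2 : c (idx (j + 1)) ≤ c i := hcchain (idx (j + 1)) i h (le_trans him (Nat.le_succ m))
        linarith
      by_cases hg : (1 + ε) * a (idx j) < a (idx (j + 1))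
      · have heq := hgap j hj1k hg
        have : i = idx j := by omega
        rw [hFx, hGx, this]
        simp only [sub_self, abs_zero]
        exact mul_nonneg hε.le (this ▸ haipos)
      · push_neg at hg
        have h1 : a (idx j) ≤ a i := hachain (idx j) i hge him
        have h2 : a i ≤ a (idx (j + 1)) := hachain i (idx (j + 1)) (le_of_lt hilt) hidxj1m
        rw [hFx, hGx, abs_le]
        constructor <;> nlinarith
end

section
/- Let Z be a finite multiset of scored labeled points with label counts (n1, n2), n1, n2 > 0, and let r_i (for the sorted unique scores s_1 < ... < s_k) be the cumulative label-count pairs r_i = Σ_{z: score(z) ≤ s_i} w(z), where w(z) = (1,0) for label 1 and (0,1) for label 2. Then the area under the piecewise-linear ROC curve through the normalized points x_0 = (0,0), x_i = (r_{i,1}/n1, r_{i,2}/n2), computed as Σ_{i=1}^{k} (x_{i,2} − x_{i−1,2})·(x_{i,1} + x_{i−1,1})/2 (trapezoid rule with the 2nd coordinate as the horizontal axis), equals U/(n1·n2), where U is the Mann-Whitney statistic of Z. -/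
/-- Number of points of label `ℓ` in `Z`, as a real. -/
noncomputable def lblCount (Z : Multiset (ℝ × ℕ)) (ℓ : ℕ) : ℝ :=
  ((Z.filter (fun z => z.2 = ℓ)).card : ℝ)

/-- Number of points of label `ℓ` in `Z` with score at most `t`, as a real. -/
noncomputable def cumCount (Z : Multiset (ℝ × ℕ)) (ℓ : ℕ) (t : ℝ) : ℝ :=
  ((Z.filter (fun z => z.2 = ℓ ∧ z.1 ≤ t)).card : ℝ)

/-- The sorted list of unique scores of `Z`. -/
noncomputable def uniqueScores (Z : Multiset (ℝ × ℕ)) : List ℝ :=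
  (Z.map Prod.fst).toFinset.sort (· ≤ ·)

/-- The `i`-th point of the ROC curve of `Z`: `(0,0)` for `i = 0`, and for
`1 ≤ i` the normalized cumulative label counts at the `i`-th smallest unique score. -/
noncomputable def rocPoint (Z : Multiset (ℝ × ℕ)) (i : ℕ) : ℝ × ℝ :=
  if i = 0 then (0, 0)
  else
    (cumCount Z 1 ((uniqueScores Z).getD (i - 1) 0) / lblCount Z 1,
      cumCount Z 2 ((uniqueScores Z).getD (i - 1) 0) / lblCount Z 2)

/-!
Group the points by score: let `a_j` and `b_j` count the points of label 1 and 2 at the `j`-th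
smallest score `s_j`. Then the ROC point `x_i` is `(∑_{j<i} a_j / n₁, ∑_{j<i} b_j / n₂)`, so the
trapezoid between `x_i` and `x_{i+1}` has area `b_i (∑_{j<i} a_j + a_i / 2) / (n₁ n₂)`. On the other
hand, for a label-2 point at score `s_i`, the comparisons with all label-1 points contribute
`∑_{j<i} a_j + a_i / 2` to `U`: strictly smaller scores count `1`, ties `1/2`.
-/

namespace Finset

variable {α M : Type*} [LinearOrder α] [AddCommMonoid M]

theorem sum_eq_sum_range_sort_getD (s : Finset α) (d : α) (f : α → M) :
    ∑ x ∈ s, f x = ∑ i ∈ range (s.sort).length, f ((s.sort).getD i d) := by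
  classical
  conv_lhs => rw [← sort_toFinset s (· ≤ ·)]
  rw [List.sum_toFinset f (sort_nodup _ _), ← Fin.sum_univ_fun_getElem, sum_range]
  exact sum_congr rfl fun i _ => by rw [List.getD_eq_getElem]

theorem sort_getD_lt_sort_getD_iff (s : Finset α) (d : α) {i j : ℕ}
    (hi : i < (s.sort).length) (hj : j < (s.sort).length) :
    (s.sort).getD i d < (s.sort).getD j d ↔ i < j := by
  rw [List.getD_eq_getElem _ _ hi, List.getD_eq_getElem _ _ hj]
  exact (sortedLT_sort s).getElem_lt_getElem_iff

theorem sort_getD_le_sort_getD_iff (s : Finset α) (d : α) {i j : ℕ}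
    (hi : i < (s.sort).length) (hj : j < (s.sort).length) :
    (s.sort).getD i d ≤ (s.sort).getD j d ↔ i ≤ j := by
  rw [List.getD_eq_getElem _ _ hi, List.getD_eq_getElem _ _ hj]
  exact (sortedLT_sort s).getElem_le_getElem_iff

theorem sum_filter_lt_sort_getD (s : Finset α) (d : α) (f : α → M) {i : ℕ}
    (hi : i < (s.sort).length) :
    ∑ x ∈ s with x < (s.sort).getD i d, f x = ∑ j ∈ range i, f ((s.sort).getD j d) := by
  rw [sum_filter, sum_eq_sum_range_sort_getD s d, ← sum_filter]
  congr 1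
  ext j
  simp only [mem_filter, mem_range]
  constructor
  · rintro ⟨hj, hji⟩
    exact (sort_getD_lt_sort_getD_iff s d hj hi).mp hji
  · intro hji
    exact ⟨hji.trans hi, (sort_getD_lt_sort_getD_iff s d (hji.trans hi) hi).mpr hji⟩

theorem sum_filter_le_sort_getD (s : Finset α) (d : α) (f : α → M) {i : ℕ}
    (hi : i < (s.sort).length) :
    ∑ x ∈ s with x ≤ (s.sort).getD i d, f x = ∑ j ∈ range (i + 1), f ((s.sort).getD j d) := by
  rw [sum_filter, sum_eq_sum_range_sort_getD s d, ← sum_filter]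
  congr 1
  ext j
  simp only [mem_filter, mem_range, Nat.lt_succ_iff]
  constructor
  · rintro ⟨hj, hji⟩
    exact (sort_getD_le_sort_getD_iff s d hj hi).mp hji
  · intro hji
    exact ⟨hji.trans_lt hi, (sort_getD_le_sort_getD_iff s d (hji.trans_lt hi) hi).mpr hji⟩

end Finset

namespace Multiset

variable {α M : Type*} [DecidableEq α]

theorem card_filter_eq_sum_count {m : Multiset α} {s : Finset α} (hm : ∀ a ∈ m, a ∈ s)
    (p : α → Prop) [DecidablePred p] :
    card (m.filter p) = ∑ a ∈ s with p a, m.count a := by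
  rw [← sum_count_eq_card fun a ha => hm a (mem_of_mem_filter ha), Finset.sum_filter]
  simp only [count_filter]

theorem sum_map_eq_sum_count_nsmul [AddCommMonoid M] {m : Multiset α} {s : Finset α}
    (hm : ∀ a ∈ m, a ∈ s) (f : α → M) :
    (m.map f).sum = ∑ a ∈ s, m.count a • f a := by
  rw [Finset.sum_multiset_map_count]
  refine Finset.sum_subset (fun a ha => hm a (mem_toFinset.mp ha)) fun a _ ha => ?_
  rw [count_eq_zero_of_notMem (mt mem_toFinset.mpr ha), zero_nsmul]

end Multiset

namespace MannWhitney

open Finset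

-- The multiset `S_ℓ` of the Mann-Whitney statistic.
noncomputable def labelScores (Z : Multiset (ℝ × ℕ)) (ℓ : ℕ) : Multiset ℝ :=
  (Z.filter (fun z => z.2 = ℓ)).map Prod.fst

noncomputable def scoreCount (Z : Multiset (ℝ × ℕ)) (ℓ : ℕ) (x : ℝ) : ℝ :=
  ((labelScores Z ℓ).count x : ℝ)

noncomputable def scoreSet (Z : Multiset (ℝ × ℕ)) : Finset ℝ :=
  (Z.map Prod.fst).toFinset

theorem sum_mul_mwf {s : Finset ℝ} {t : ℝ} (ht : t ∈ s) (g : ℝ → ℝ) :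
    ∑ x ∈ s, g x * mwf x t = ∑ x ∈ s with x < t, g x + g t / 2 := by
  have hsplit (x : ℝ) :
      g x * mwf x t = (if x < t then g x else 0) + (if x = t then g x / 2 else 0) := by
    rcases lt_trichotomy x t with h | rfl | h
    · simp [mwf, h, h.ne]
    · simp [mwf]
      ring
    · simp [mwf, h.ne', h.not_gt]
  rw [sum_congr rfl fun x _ => hsplit x, sum_add_distrib, sum_filter,
    sum_ite_eq' s t, if_pos ht]

variable (Z : Multiset (ℝ × ℕ))

theorem uniqueScores_eq_sort_scoreSet : uniqueScores Z = (scoreSet Z).sort := rfl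

theorem mem_scoreSet_of_mem_labelScores {ℓ : ℕ} : ∀ x ∈ labelScores Z ℓ, x ∈ scoreSet Z := by
  intro x hx
  obtain ⟨z, hz, rfl⟩ := Multiset.mem_map.mp hx
  exact Multiset.mem_toFinset.mpr (Multiset.mem_map_of_mem _ (Multiset.mem_of_mem_filter hz))

theorem card_filter_labelScores (ℓ : ℕ) (p : ℝ → Prop) [DecidablePred p] :
    Multiset.card ((labelScores Z ℓ).filter p) =
      Multiset.card (Z.filter fun z => z.2 = ℓ ∧ p z.1) := by
  rw [labelScores, Multiset.filter_map, Multiset.card_map, Multiset.filter_filter]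
  exact congrArg _ (Multiset.filter_congr fun z _ => and_comm)

theorem cumCount_eq_sum_scoreCount (ℓ : ℕ) (t : ℝ) :
    cumCount Z ℓ t = ∑ x ∈ scoreSet Z with x ≤ t, scoreCount Z ℓ x := by
  rw [cumCount, ← card_filter_labelScores Z ℓ (· ≤ t),
    Multiset.card_filter_eq_sum_count (mem_scoreSet_of_mem_labelScores Z)]
  push_cast
  rfl

theorem mwStat_eq_sum_scoreCount :
    mwStat Z = ∑ t ∈ scoreSet Z, scoreCount Z 2 t *
      (∑ x ∈ scoreSet Z with x < t, scoreCount Z 1 x + scoreCount Z 1 t / 2) := by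
  have hcount : mwStat Z = ∑ x ∈ scoreSet Z, ∑ t ∈ scoreSet Z,
      scoreCount Z 1 x * scoreCount Z 2 t * mwf x t := by
    change ((labelScores Z 1).map fun x => ((labelScores Z 2).map (mwf x)).sum).sum = _
    simp only [Multiset.sum_map_eq_sum_count_nsmul (mem_scoreSet_of_mem_labelScores Z),
      nsmul_eq_mul, mul_sum, scoreCount, mul_assoc]
  rw [hcount, sum_comm]
  refine sum_congr rfl fun t ht => ?_
  rw [← sum_mul_mwf ht, mul_sum]
  exact sum_congr rfl fun x _ => by ring

theorem mwStat_eq_sum_range :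
    mwStat Z = ∑ j ∈ range (uniqueScores Z).length,
      scoreCount Z 2 ((uniqueScores Z).getD j 0) *
        (∑ i ∈ range j, scoreCount Z 1 ((uniqueScores Z).getD i 0)
          + scoreCount Z 1 ((uniqueScores Z).getD j 0) / 2) := by
  rw [uniqueScores_eq_sort_scoreSet, mwStat_eq_sum_scoreCount, sum_eq_sum_range_sort_getD _ 0]
  exact sum_congr rfl fun j hj => by rw [sum_filter_lt_sort_getD _ _ _ (mem_range.mp hj)]

theorem rocPoint_eq_sum_range {i : ℕ} (hi : i ≤ (uniqueScores Z).length) :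
    rocPoint Z i =
      ((∑ j ∈ range i, scoreCount Z 1 ((uniqueScores Z).getD j 0)) / lblCount Z 1,
        (∑ j ∈ range i, scoreCount Z 2 ((uniqueScores Z).getD j 0)) / lblCount Z 2) := by
  rcases i with _ | i
  · simp [rocPoint]
  · rw [rocPoint, if_neg i.succ_ne_zero, Nat.add_sub_cancel, cumCount_eq_sum_scoreCount,
      cumCount_eq_sum_scoreCount, uniqueScores_eq_sort_scoreSet,
      sum_filter_le_sort_getD (scoreSet Z) _ _ hi, sum_filter_le_sort_getD (scoreSet Z) _ _ hi]

end MannWhitney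

open MannWhitney Finset in
theorem trapezoid_auc_eq_mannWhitney_general (Z : Multiset (ℝ × ℕ)) :
    ∑ i ∈ Finset.Icc 1 (uniqueScores Z).length,
        ((rocPoint Z i).2 - (rocPoint Z (i - 1)).2)
          * ((rocPoint Z i).1 + (rocPoint Z (i - 1)).1) / 2
      = mwStat Z / (lblCount Z 1 * lblCount Z 2) := by
  rw [mwStat_eq_sum_range, sum_div, ← Ico_add_one_right_eq_Icc, sum_Ico_eq_sum_range,
    Nat.add_sub_cancel]
  refine sum_congr rfl fun i hi => ?_
  rw [add_comm 1 i, Nat.add_sub_cancel, rocPoint_eq_sum_range Z (mem_range.mp hi),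
    rocPoint_eq_sum_range Z (mem_range.mp hi).le, sum_range_succ, sum_range_succ]
  ring

theorem trapezoid_auc_eq_mannWhitney (Z : Multiset (ℝ × ℕ))
    (hlab : ∀ z ∈ Z, z.2 = 1 ∨ z.2 = 2)
    (hn1 : (Z.filter (fun z => z.2 = 1)) ≠ 0)
    (hn2 : (Z.filter (fun z => z.2 = 2)) ≠ 0) :
    ∑ i ∈ Finset.Icc 1 (uniqueScores Z).length,
        ((rocPoint Z i).2 - (rocPoint Z (i - 1)).2)
          * ((rocPoint Z i).1 + (rocPoint Z (i - 1)).1) / 2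
      = mwStat Z / (lblCount Z 1 * lblCount Z 2) :=
  trapezoid_auc_eq_mannWhitney_general Z
end
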